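/- Fix π_A ∈ (0,1), μ_A > 0 and μ_N < 0. Define G : [0,1] → [0,1] by G(x) = (1−π_A)·Φ(Φ⁻¹(x)+μ_N) + π_A·Φ(Φ⁻¹(x)+μ_A) for x ∈ (0,1), with G(0) = 0 and G(1) = 1, and set J(x) = x − G(x). Then J has exactly one zero c* in the open interval (0,1), and J(x) ≤ 0 for all x ∈ [0, c*] while J(x) ≥ 0 for all x ∈ [c*, 1]. -/

import Mathlib

/-!
In the quantile coordinate `z = Φ⁻¹ x` the gap becomes
`H z = Φ z - (1 - π_A) Φ (z + μ_N) - π_A Φ (z + μ_A)`, which tends to `0` at both ends and has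
derivative `φ z (1 - ℓ z)` with `ℓ z = (1 - π_A) e^(-μ_N z - μ_N²/2) + π_A e^(-μ_A z - μ_A²/2)`.
As `μ_N < 0 < μ_A`, `ℓ` is strictly convex, tends to `∞` at both ends and `ℓ 0 < 1`, so `ℓ < 1`
exactly on a bounded interval `(a, b)`. Hence `H` strictly decreases on `(-∞, a]`, increases on
`[a, b]` and decreases on `[b, ∞)`: it is negative up to `a`, positive from `b` on, and crosses
zero exactly once in between.
-/

open MeasureTheory ProbabilityTheory

/-- The standard normal CDF `Φ`. -/
noncomputable def stdNormalCDF (x : ℝ) : ℝ :=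
  (ProbabilityTheory.gaussianReal 0 1 (Set.Iic x)).toReal

/-- The inverse `Φ⁻¹` of the standard normal CDF (on `(0,1)`). -/
noncomputable def stdNormalQuantile : ℝ → ℝ :=
  Function.invFun stdNormalCDF

open Set Filter Real
open scoped Topology

section SignChange

variable {β : Type*} [TopologicalSpace β] [LinearOrder β] [OrderClosedTopology β]

theorem StrictAntiOn.lt_of_tendsto_atBot {α : Type*} [LinearOrder α] [NoMinOrder α] {f : α → β}
    {a z : α} {l : β}
    (hf : StrictAntiOn f (Iic a)) (hl : Tendsto f atBot (𝓝 l)) (hz : z ≤ a) : f z < l := by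
  obtain ⟨w, hwz⟩ := exists_lt z
  have hwa : w ≤ a := hwz.le.trans hz
  have : Nonempty α := ⟨z⟩
  calc f z < f w := hf hwa hz hwz
    _ ≤ l := ge_of_tendsto hl <|
      (eventually_le_atBot w).mono fun u hu => hf.antitoneOn (hu.trans hwa) hwa hu

theorem StrictAntiOn.lt_of_tendsto_atTop {α : Type*} [LinearOrder α] [NoMaxOrder α] {f : α → β}
    {b z : α} {l : β}
    (hf : StrictAntiOn f (Ici b)) (hl : Tendsto f atTop (𝓝 l)) (hz : b ≤ z) : l < f z := by
  obtain ⟨w, hzw⟩ := exists_gt z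
  have hbw : b ≤ w := hz.trans hzw.le
  have : Nonempty α := ⟨z⟩
  calc l ≤ f w := le_of_tendsto hl <|
      (eventually_ge_atTop w).mono fun u hu => hf.antitoneOn hbw (hbw.trans hu) hu
    _ < f z := hf hz hbw hzw

theorem exists_le_iff_of_strictAntiOn_strictMonoOn_strictAntiOn {α : Type*}
    [ConditionallyCompleteLinearOrder α] [TopologicalSpace α] [OrderTopology α] [DenselyOrdered α]
    [NoMinOrder α] [NoMaxOrder α] {H : α → β} {a b : α} {l : β}
    (hab : a ≤ b) (hcont : ContinuousOn H (Icc a b))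
    (hbot : Tendsto H atBot (𝓝 l)) (htop : Tendsto H atTop (𝓝 l))
    (hanti₁ : StrictAntiOn H (Iic a)) (hmono : StrictMonoOn H (Icc a b))
    (hanti₂ : StrictAntiOn H (Ici b)) :
    ∃ c, ∀ z, (H z ≤ l ↔ z ≤ c) ∧ (l ≤ H z ↔ c ≤ z) := by
  obtain ⟨c, hc, hHc⟩ := intermediate_value_Icc hab hcont
    ⟨(hanti₁.lt_of_tendsto_atBot hbot le_rfl).le, (hanti₂.lt_of_tendsto_atTop htop le_rfl).le⟩
  have hlt : ∀ z < c, H z < l := fun z hz => (le_total z a).elim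
    (hanti₁.lt_of_tendsto_atBot hbot) fun haz => hHc ▸ hmono ⟨haz, hz.le.trans hc.2⟩ hc hz
  have hgt : ∀ z, c < z → l < H z := fun z hz => (le_total b z).elim
    (hanti₂.lt_of_tendsto_atTop htop) fun hzb => hHc ▸ hmono hc ⟨hc.1.trans hz.le, hzb⟩ hz
  refine ⟨c, fun z => ⟨⟨fun h => not_lt.1 fun hcz => (hgt z hcz).not_ge h, fun h => ?_⟩,
    ⟨fun h => not_lt.1 fun hzc => (hlt z hzc).not_ge h, fun h => ?_⟩⟩⟩
  · exact h.eq_or_lt.elim (fun hzc => hzc ▸ hHc.le) fun hzc => (hlt z hzc).le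
  · exact h.eq_or_lt.elim (fun hcz => hcz ▸ hHc.ge) fun hcz => (hgt z hcz).le

end SignChange

theorem StrictConvexOn.exists_lt_inside_gt_outside {f : ℝ → ℝ} (hf : StrictConvexOn ℝ univ f)
    (hbot : Tendsto f atBot atTop) (htop : Tendsto f atTop atTop) {r z₀ : ℝ} (hz₀ : f z₀ < r) :
    ∃ a b, a < b ∧ (∀ z < a, r < f z) ∧ (∀ z ∈ Ioo a b, f z < r) ∧ (∀ z, b < z → r < f z) := by
  have hcont : Continuous f := continuousOn_univ.1 (hf.convexOn.continuousOn isOpen_univ)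
  obtain ⟨a, ha, hfa⟩ : ∃ a < z₀, f a = r := by
    obtain ⟨w, hrw, hwz⟩ := ((hbot.eventually_gt_atTop r).and (eventually_lt_atBot z₀)).exists
    obtain ⟨a, ha, hfa⟩ := intermediate_value_Icc' hwz.le hcont.continuousOn ⟨hz₀.le, hrw.le⟩
    exact ⟨a, ha.2.lt_of_ne (by rintro rfl; linarith), hfa⟩
  obtain ⟨b, hb, hfb⟩ : ∃ b > z₀, f b = r := by
    obtain ⟨w, hrw, hzw⟩ := ((htop.eventually_gt_atTop r).and (eventually_gt_atTop z₀)).exists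
    obtain ⟨b, hb, hfb⟩ := intermediate_value_Icc hzw.le hcont.continuousOn ⟨hz₀.le, hrw.le⟩
    exact ⟨b, hb.1.lt_of_ne' (by rintro rfl; linarith), hfb⟩
  have hab : a < b := ha.trans hb
  have hseg : ∀ {x y z}, x < z → z < y → f z < max (f x) (f y) := fun hxz hzy =>
    hf.lt_on_openSegment (mem_univ _) (mem_univ _) (hxz.trans hzy).ne
      (by rw [openSegment_eq_Ioo (hxz.trans hzy)]; exact ⟨hxz, hzy⟩)
  refine ⟨a, b, hab, fun z hz => ?_, fun z hz => ?_, fun z hz => ?_⟩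
  · by_contra! h
    simpa [hfa, hfb, h] using hseg hz hab
  · simpa [hfa, hfb] using hseg hz.1 hz.2
  · by_contra! h
    simpa [hfa, hfb, h] using hseg hab hz

theorem stdNormalCDF_eq_cdf (x : ℝ) : stdNormalCDF x = cdf (gaussianReal 0 1) x := by
  rw [stdNormalCDF, cdf_eq_real, measureReal_def]

theorem stdNormalCDF_eq_integral (x : ℝ) :
    stdNormalCDF x = ∫ t in Iic x, gaussianPDFReal 0 1 t := by
  rw [stdNormalCDF, gaussianReal_apply_eq_integral 0 one_ne_zero,
    ENNReal.toReal_ofReal (integral_nonneg (gaussianPDFReal_nonneg 0 1))]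

theorem stdNormalCDF_sub_stdNormalCDF (a b : ℝ) :
    stdNormalCDF b - stdNormalCDF a = ∫ t in a..b, gaussianPDFReal 0 1 t := by
  rw [stdNormalCDF_eq_integral, stdNormalCDF_eq_integral,
    intervalIntegral.integral_Iic_sub_Iic (integrable_gaussianPDFReal 0 1).integrableOn
      (integrable_gaussianPDFReal 0 1).integrableOn]

theorem stdNormalCDF_strictMono : StrictMono stdNormalCDF := fun a b hab => by
  have := intervalIntegral.intervalIntegral_pos_of_pos
    (integrable_gaussianPDFReal 0 1).intervalIntegrable
    (fun t => gaussianPDFReal_pos 0 1 t one_ne_zero) hab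
  rw [← stdNormalCDF_sub_stdNormalCDF] at this
  linarith

theorem hasDerivAt_stdNormalCDF (x : ℝ) :
    HasDerivAt stdNormalCDF (gaussianPDFReal 0 1 x) x := by
  have hφ : Continuous (gaussianPDFReal 0 1) := by
    rw [gaussianPDFReal_def]
    fun_prop
  have hΦ :
      stdNormalCDF = fun y => stdNormalCDF 0 + ∫ t in (0 : ℝ)..y, gaussianPDFReal 0 1 t := by
    ext y
    rw [← stdNormalCDF_sub_stdNormalCDF, add_sub_cancel]
  rw [hΦ]
  exact (intervalIntegral.integral_hasDerivAt_right
    (integrable_gaussianPDFReal 0 1).intervalIntegrable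
    hφ.aestronglyMeasurable.stronglyMeasurableAtFilter hφ.continuousAt).const_add _

theorem continuous_stdNormalCDF : Continuous stdNormalCDF :=
  continuous_iff_continuousAt.2 fun x => (hasDerivAt_stdNormalCDF x).continuousAt

theorem tendsto_stdNormalCDF_atBot : Tendsto stdNormalCDF atBot (𝓝 0) :=
  (tendsto_cdf_atBot (gaussianReal 0 1)).congr fun x => (stdNormalCDF_eq_cdf x).symm

theorem tendsto_stdNormalCDF_atTop : Tendsto stdNormalCDF atTop (𝓝 1) :=
  (tendsto_cdf_atTop (gaussianReal 0 1)).congr fun x => (stdNormalCDF_eq_cdf x).symm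

theorem stdNormalCDF_mem_Ioo (x : ℝ) : stdNormalCDF x ∈ Ioo (0 : ℝ) 1 :=
  ⟨(stdNormalCDF_eq_cdf (x - 1) ▸ cdf_nonneg _ _).trans_lt
      (stdNormalCDF_strictMono (sub_one_lt x)),
    (stdNormalCDF_strictMono (lt_add_one x)).trans_le
      (stdNormalCDF_eq_cdf (x + 1) ▸ cdf_le_one _ _)⟩

theorem stdNormalQuantile_stdNormalCDF (z : ℝ) : stdNormalQuantile (stdNormalCDF z) = z :=
  Function.leftInverse_invFun stdNormalCDF_strictMono.injective z

theorem stdNormalCDF_stdNormalQuantile {x : ℝ} (hx : x ∈ Ioo (0 : ℝ) 1) :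
    stdNormalCDF (stdNormalQuantile x) = x :=
  Function.invFun_eq <| mem_range_of_exists_le_of_exists_ge continuous_stdNormalCDF
    ((tendsto_stdNormalCDF_atBot.eventually_le_const hx.1).exists)
    ((tendsto_stdNormalCDF_atTop.eventually_const_le hx.2).exists)

theorem stdNormalQuantile_le_iff {x : ℝ} (hx : x ∈ Ioo (0 : ℝ) 1) {z : ℝ} :
    stdNormalQuantile x ≤ z ↔ x ≤ stdNormalCDF z := by
  rw [← stdNormalCDF_strictMono.le_iff_le, stdNormalCDF_stdNormalQuantile hx]

theorem le_stdNormalQuantile_iff {x : ℝ} (hx : x ∈ Ioo (0 : ℝ) 1) {z : ℝ} :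
    z ≤ stdNormalQuantile x ↔ stdNormalCDF z ≤ x := by
  rw [← stdNormalCDF_strictMono.le_iff_le, stdNormalCDF_stdNormalQuantile hx]

theorem gaussianPDFReal_zero_one_add (z μ : ℝ) :
    gaussianPDFReal 0 1 (z + μ) = gaussianPDFReal 0 1 z * rexp (-μ * z - μ ^ 2 / 2) := by
  simp only [gaussianPDFReal, NNReal.coe_one, mul_one, sub_zero]
  rw [mul_assoc, ← Real.exp_add]
  ring_nf

theorem strictConvexOn_const_mul_exp_affine {c a : ℝ} (hc : 0 < c) (ha : a ≠ 0) (b : ℝ) :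
    StrictConvexOn ℝ univ fun z => c * rexp (a * z - b) := by
  refine ⟨convex_univ, fun x _ y _ hxy s t hs ht hst => ?_⟩
  have hne : a * x - b ≠ a * y - b := by simpa [ha] using hxy
  have h := strictConvexOn_exp.2 (mem_univ _) (mem_univ _) hne hs ht hst
  simp only [smul_eq_mul] at h ⊢
  calc c * rexp (a * (s * x + t * y) - b) = c * rexp (s * (a * x - b) + t * (a * y - b)) := by
        congr 2; linear_combination b * hst
    _ < c * (s * rexp (a * x - b) + t * rexp (a * y - b)) := mul_lt_mul_of_pos_left h hc
    _ = s * (c * rexp (a * x - b)) + t * (c * rexp (a * y - b)) := by ring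

/-- `G' (Φ z)`: the mixture of the likelihood ratios `φ (z + μ) / φ z = exp (-μ z - μ² / 2)`. -/
noncomputable def mixtureLikelihoodRatio (πA μA μN z : ℝ) : ℝ :=
  (1 - πA) * rexp (-μN * z - μN ^ 2 / 2) + πA * rexp (-μA * z - μA ^ 2 / 2)

/-- `J (Φ z)`: the gap `x - G x` in the quantile coordinate `z = Φ⁻¹ x`. -/
noncomputable def mixtureGap (πA μA μN z : ℝ) : ℝ :=
  stdNormalCDF z - ((1 - πA) * stdNormalCDF (z + μN) + πA * stdNormalCDF (z + μA))

section Mixture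

variable {πA μA μN : ℝ}

theorem strictConvexOn_mixtureLikelihoodRatio (hπA : πA ∈ Ioo (0 : ℝ) 1) (hμA : μA ≠ 0)
    (hμN : μN ≠ 0) : StrictConvexOn ℝ univ (mixtureLikelihoodRatio πA μA μN) :=
  (strictConvexOn_const_mul_exp_affine (sub_pos.2 hπA.2) (neg_ne_zero.2 hμN) _).add
    (strictConvexOn_const_mul_exp_affine hπA.1 (neg_ne_zero.2 hμA) _)

theorem mixtureLikelihoodRatio_zero_lt_one (hπA : πA ∈ Ioo (0 : ℝ) 1) (hμA : μA ≠ 0)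
    (hμN : μN ≠ 0) : mixtureLikelihoodRatio πA μA μN 0 < 1 := by
  have h : ∀ μ : ℝ, μ ≠ 0 → rexp (-μ * 0 - μ ^ 2 / 2) < 1 := fun μ hμ => by
    rw [mul_zero, zero_sub, exp_lt_one_iff, neg_lt_zero]
    positivity
  unfold mixtureLikelihoodRatio
  linarith [mul_lt_mul_of_pos_left (h μN hμN) (sub_pos.2 hπA.2),
    mul_lt_mul_of_pos_left (h μA hμA) hπA.1]

theorem tendsto_mixtureLikelihoodRatio_atBot (hπA : 0 < πA) (hπA' : πA ≤ 1) (hμA : 0 < μA) :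
    Tendsto (mixtureLikelihoodRatio πA μA μN) atBot atTop := by
  have hlin : Tendsto (fun z : ℝ => -μA * z - μA ^ 2 / 2) atBot atTop :=
    tendsto_atTop_add_const_right _ _ (tendsto_id.const_mul_atBot_of_neg (neg_lt_zero.2 hμA))
  refine tendsto_atTop_mono (fun z => le_add_of_nonneg_left ?_)
    ((tendsto_exp_atTop.comp hlin).const_mul_atTop hπA)
  exact mul_nonneg (sub_nonneg.2 hπA') (exp_pos _).le

theorem tendsto_mixtureLikelihoodRatio_atTop (hπA : 0 ≤ πA) (hπA' : πA < 1) (hμN : μN < 0) :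
    Tendsto (mixtureLikelihoodRatio πA μA μN) atTop atTop := by
  have hlin : Tendsto (fun z : ℝ => -μN * z - μN ^ 2 / 2) atTop atTop :=
    tendsto_atTop_add_const_right _ _ (tendsto_id.const_mul_atTop (neg_pos.2 hμN))
  refine tendsto_atTop_mono (fun z => le_add_of_nonneg_right ?_)
    ((tendsto_exp_atTop.comp hlin).const_mul_atTop (sub_pos.2 hπA'))
  exact mul_nonneg hπA (exp_pos _).le

theorem hasDerivAt_mixtureGap (z : ℝ) :
    HasDerivAt (mixtureGap πA μA μN)
      (gaussianPDFReal 0 1 z * (1 - mixtureLikelihoodRatio πA μA μN z)) z := by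
  have hN := (hasDerivAt_stdNormalCDF (z + μN)).comp_add_const z μN
  have hA := (hasDerivAt_stdNormalCDF (z + μA)).comp_add_const z μA
  refine ((hasDerivAt_stdNormalCDF z).sub
    ((hN.const_mul (1 - πA)).add (hA.const_mul πA))).congr_deriv ?_
  rw [gaussianPDFReal_zero_one_add, gaussianPDFReal_zero_one_add, mixtureLikelihoodRatio]
  ring

theorem continuous_mixtureGap : Continuous (mixtureGap πA μA μN) :=
  continuous_iff_continuousAt.2 fun z => (hasDerivAt_mixtureGap z).continuousAt

theorem tendsto_mixtureGap_atBot : Tendsto (mixtureGap πA μA μN) atBot (𝓝 0) := by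
  have hN := tendsto_stdNormalCDF_atBot.comp (tendsto_atBot_add_const_right atBot μN tendsto_id)
  have hA := tendsto_stdNormalCDF_atBot.comp (tendsto_atBot_add_const_right atBot μA tendsto_id)
  have h := tendsto_stdNormalCDF_atBot.sub ((hN.const_mul (1 - πA)).add (hA.const_mul πA))
  rwa [mul_zero, mul_zero, add_zero, sub_zero] at h

theorem tendsto_mixtureGap_atTop : Tendsto (mixtureGap πA μA μN) atTop (𝓝 0) := by
  have hN := tendsto_stdNormalCDF_atTop.comp (tendsto_atTop_add_const_right atTop μN tendsto_id)
  have hA := tendsto_stdNormalCDF_atTop.comp (tendsto_atTop_add_const_right atTop μA tendsto_id)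
  have h := tendsto_stdNormalCDF_atTop.sub ((hN.const_mul (1 - πA)).add (hA.const_mul πA))
  rwa [mul_one, mul_one, sub_add_cancel, sub_self] at h

theorem strictAntiOn_mixtureGap {D : Set ℝ} (hD : Convex ℝ D)
    (h : ∀ z ∈ interior D, 1 < mixtureLikelihoodRatio πA μA μN z) :
    StrictAntiOn (mixtureGap πA μA μN) D :=
  strictAntiOn_of_hasDerivWithinAt_neg hD continuous_mixtureGap.continuousOn
    (fun z _ => (hasDerivAt_mixtureGap z).hasDerivWithinAt)
    fun z hz => mul_neg_of_pos_of_neg (gaussianPDFReal_pos 0 1 z one_ne_zero) (sub_neg.2 (h z hz))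

theorem strictMonoOn_mixtureGap {D : Set ℝ} (hD : Convex ℝ D)
    (h : ∀ z ∈ interior D, mixtureLikelihoodRatio πA μA μN z < 1) :
    StrictMonoOn (mixtureGap πA μA μN) D :=
  strictMonoOn_of_hasDerivWithinAt_pos hD continuous_mixtureGap.continuousOn
    (fun z _ => (hasDerivAt_mixtureGap z).hasDerivWithinAt)
    fun z hz => mul_pos (gaussianPDFReal_pos 0 1 z one_ne_zero) (sub_pos.2 (h z hz))

theorem exists_mixtureGap_nonpos_iff (hπA : πA ∈ Ioo (0 : ℝ) 1) (hμA : 0 < μA) (hμN : μN < 0) :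
    ∃ c, ∀ z, (mixtureGap πA μA μN z ≤ 0 ↔ z ≤ c) ∧ (0 ≤ mixtureGap πA μA μN z ↔ c ≤ z) := by
  obtain ⟨a, b, hab, hlt, hmid, hgt⟩ :=
    (strictConvexOn_mixtureLikelihoodRatio hπA hμA.ne' hμN.ne).exists_lt_inside_gt_outside
      (tendsto_mixtureLikelihoodRatio_atBot hπA.1 hπA.2.le hμA)
      (tendsto_mixtureLikelihoodRatio_atTop hπA.1.le hπA.2 hμN)
      (mixtureLikelihoodRatio_zero_lt_one hπA hμA.ne' hμN.ne)
  refine exists_le_iff_of_strictAntiOn_strictMonoOn_strictAntiOn hab.le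
    continuous_mixtureGap.continuousOn tendsto_mixtureGap_atBot tendsto_mixtureGap_atTop
    (strictAntiOn_mixtureGap (convex_Iic a) ?_) (strictMonoOn_mixtureGap (convex_Icc a b) ?_)
    (strictAntiOn_mixtureGap (convex_Ici b) ?_)
  · rwa [interior_Iic]
  · rwa [interior_Icc]
  · rwa [interior_Ici]

end Mixture

/-- **Sign pattern of `J(x) = x − G(x)` for the Gaussian mixture p-value CDF.**
With `G(x) = (1−π_A)Φ(Φ⁻¹(x)+μ_N) + π_A Φ(Φ⁻¹(x)+μ_A)` on `(0,1)`, `G(0)=0`, `G(1)=1`,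
the function `J(x) = x − G(x)` has exactly one zero `c*` in `(0,1)`, with `J ≤ 0` on
`[0, c*]` and `J ≥ 0` on `[c*, 1]`. -/
theorem mixture_cdf_gap_unique_zero
    (πA μA μN : ℝ) (hπA : πA ∈ Set.Ioo (0 : ℝ) 1) (hμA : 0 < μA) (hμN : μN < 0)
    (G : ℝ → ℝ)
    (hG : ∀ x ∈ Set.Ioo (0 : ℝ) 1,
      G x = (1 - πA) * stdNormalCDF (stdNormalQuantile x + μN) +
        πA * stdNormalCDF (stdNormalQuantile x + μA))
    (hG0 : G 0 = 0) (hG1 : G 1 = 1) :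
    ∃ c ∈ Set.Ioo (0 : ℝ) 1,
      c - G c = 0 ∧
      (∀ x ∈ Set.Ioo (0 : ℝ) 1, x - G x = 0 → x = c) ∧
      (∀ x ∈ Set.Icc (0 : ℝ) c, x - G x ≤ 0) ∧
      (∀ x ∈ Set.Icc c 1, 0 ≤ x - G x) := by
  obtain ⟨z₀, hz₀⟩ := exists_mixtureGap_nonpos_iff hπA hμA hμN
  set c := stdNormalCDF z₀
  have hc : c ∈ Ioo (0 : ℝ) 1 := stdNormalCDF_mem_Ioo z₀
  have hJ : ∀ x ∈ Ioo (0 : ℝ) 1, (x - G x ≤ 0 ↔ x ≤ c) ∧ (0 ≤ x - G x ↔ c ≤ x) := by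
    intro x hx
    have hgap : x - G x = mixtureGap πA μA μN (stdNormalQuantile x) := by
      rw [hG x hx, mixtureGap, stdNormalCDF_stdNormalQuantile hx]
    rw [hgap, ← stdNormalQuantile_le_iff hx, ← le_stdNormalQuantile_iff hx]
    exact hz₀ _
  refine ⟨c, hc, le_antisymm ((hJ c hc).1.2 le_rfl) ((hJ c hc).2.2 le_rfl),
    fun x hx h => le_antisymm ((hJ x hx).1.1 h.le) ((hJ x hx).2.1 h.ge), fun x hx => ?_,
    fun x hx => ?_⟩
  · rcases hx.1.eq_or_lt with rfl | hx0
    · rw [hG0, sub_zero]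
    · exact (hJ x ⟨hx0, hx.2.trans_lt hc.2⟩).1.2 hx.2
  · rcases hx.2.eq_or_lt with rfl | hx1
    · rw [hG1, sub_self]
    · exact (hJ x ⟨hc.1.trans_le hx.1, hx1⟩).2.2 hx.1
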